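/- arXiv:2405.16149 — 2 statements merged into one kernel-verified Lean document; each statement's English description precedes it below -/
import Mathlib

section
/- Let F be a smallest (minimum number of clauses) unsatisfiable (3,1,q)-formula with q ≥ 3 and let {x1,x2,x3} ∈ F be a clause whose three literals each occur exactly once in F. Then: (a) no clause of F contains two of ¬x1, ¬x2, ¬x3; and (b) each literal ¬xi occurs in at least 3 clauses of F. -/
abbrev Lit := ℕ × Bool

def Lit.neg (l : Lit) : Lit := (l.1, !l.2)

abbrev Clause := Finset Lit

def Clause.nontaut (C : Clause) : Prop := ∀ l ∈ C, Lit.neg l ∉ C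

instance (C : Clause) : Decidable (Clause.nontaut C) := by
  unfold Clause.nontaut; infer_instance

abbrev CNF := Finset Clause

def satClause (τ : ℕ → Bool) (C : Clause) : Prop := ∃ l ∈ C, τ l.1 = l.2

def satCNF (τ : ℕ → Bool) (F : CNF) : Prop := ∀ C ∈ F, satClause τ C

def Satisfiable (F : CNF) : Prop := ∃ τ, satCNF τ F

def occ (F : CNF) (v : ℕ) : CNF := F.filter (fun C => (v, true) ∈ C ∨ (v, false) ∈ C)

def vdeg (F : CNF) (v : ℕ) : ℕ := (occ F v).card

def ldeg (F : CNF) (l : Lit) : ℕ := (F.filter (fun C => l ∈ C)).card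

def vars (F : CNF) : Finset ℕ := F.sup (fun C => C.image Prod.fst)

def isKCNF (k : ℕ) (F : CNF) : Prop := ∀ C ∈ F, Clause.nontaut C ∧ C.card = k

def KS (k s : ℕ) (F : CNF) : Prop := isKCNF k F ∧ ∀ v, vdeg F v ≤ s

def KPQ (k p q : ℕ) (F : CNF) : Prop :=
  isKCNF k F ∧ ∀ v, ldeg F (v, true) ≤ p ∧ ldeg F (v, false) ≤ q

def MinUnsat (F : CNF) : Prop := ¬ Satisfiable F ∧ ∀ C ∈ F, Satisfiable (F.erase C)

open Finset

lemma Lit.neg_neg (l : Lit) : l.neg.neg = l := by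
  simp [Lit.neg]

lemma Lit.neg_ne (l : Lit) : l.neg ≠ l := by
  obtain ⟨v, s⟩ := l
  cases s <;> simp [Lit.neg]

lemma Lit.eq_or_eq_neg_of_fst_eq {l m : Lit} (h : l.1 = m.1) : l = m ∨ l = m.neg := by
  obtain ⟨v, s⟩ := l
  obtain ⟨w, t⟩ := m
  simp only [Lit.neg] at h ⊢
  subst h
  cases s <;> cases t <;> simp

lemma Lit.eval_of_not_eval_neg {τ : ℕ → Bool} {l : Lit} (h : ¬τ l.neg.1 = l.neg.2) :
    τ l.1 = l.2 := by
  simpa [Lit.neg] using h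

lemma Clause.nontaut.mono {C D : Clause} (hCD : D ⊆ C) (hC : C.nontaut) : D.nontaut :=
  fun l hl hnl => hC l (hCD hl) (hCD hnl)

lemma Clause.nontaut.insert {C : Clause} {l : Lit} (hC : C.nontaut) (hl : l.neg ∉ C) :
    (insert l C).nontaut := by
  intro m hm hnm
  rcases mem_insert.1 hm with rfl | hm
  · rcases mem_insert.1 hnm with h | h
    · exact m.neg_ne h
    · exact hl h
  · rcases mem_insert.1 hnm with h | h
    · exact hl (h ▸ m.neg_neg.symm ▸ hm)
    · exact hC m hm h

lemma isKCNF.mono {k : ℕ} {F G : CNF} (hGF : G ⊆ F) (hF : isKCNF k F) : isKCNF k G :=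
  fun C hC => hF C (hGF hC)

lemma ldeg_mono {F G : CNF} (hGF : G ⊆ F) (l : Lit) : ldeg G l ≤ ldeg F l :=
  card_le_card (filter_subset_filter _ hGF)

lemma eq_of_ldeg_eq_one {F : CNF} {l : Lit} (hl : ldeg F l = 1) {C E : Clause}
    (hC : C ∈ F) (hlC : l ∈ C) (hE : E ∈ F) (hlE : l ∈ E) : E = C :=
  card_le_one.1 hl.le E (mem_filter.2 ⟨hE, hlE⟩) C (mem_filter.2 ⟨hC, hlC⟩)

lemma KPQ.of_ldeg_le {k p q : ℕ} {F G : CNF} (hF : KPQ k p q F) (hG : isKCNF k G)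
    (hGF : ∀ l, ldeg G l ≤ ldeg F l) : KPQ k p q G :=
  ⟨hG, fun v => ⟨(hGF _).trans (hF.2 v).1, (hGF _).trans (hF.2 v).2⟩⟩

section Assignment

variable {τ : ℕ → Bool}

lemma update_eval_of_ne_neg {l m : Lit} (hm : τ m.1 = m.2) (hml : m ≠ l.neg) :
    Function.update τ l.1 l.2 m.1 = m.2 := by
  by_cases h : m.1 = l.1
  · rcases Lit.eq_or_eq_neg_of_fst_eq h with rfl | rfl
    · simp
    · exact absurd rfl hml
  · rw [Function.update_of_ne h, hm]

lemma satClause_update_of_mem {l : Lit} {E : Clause} (hl : l ∈ E) :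
    satClause (Function.update τ l.1 l.2) E :=
  ⟨l, hl, by simp⟩

lemma satClause_update_of_neg_notMem {l : Lit} {E : Clause} (hE : satClause τ E)
    (hlE : l.neg ∉ E) : satClause (Function.update τ l.1 l.2) E := by
  obtain ⟨m, hm, hτm⟩ := hE
  exact ⟨m, hm, update_eval_of_ne_neg hτm (ne_of_mem_of_not_mem hm hlE)⟩

end Assignment

/-- A clause `D` is blocked on `l ∈ D` if its resolvent on `l` with every clause of `F` is
tautological. -/
def BlockedOn (F : CNF) (D : Clause) (l : Lit) : Prop :=
  l ∈ D ∧ ∀ E ∈ F, l.neg ∈ E → ∃ m ∈ E, m ≠ l.neg ∧ m.neg ∈ D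

lemma Satisfiable.of_erase_of_blockedOn {F : CNF} {D : Clause} {l : Lit} (hD : BlockedOn F D l)
    (h : Satisfiable (F.erase D)) : Satisfiable F := by
  obtain ⟨τ, hτ⟩ := h
  have hτ' : ∀ E ∈ F, E ≠ D → satClause τ E := fun E hE hED => hτ E (mem_erase.2 ⟨hED, hE⟩)
  by_cases hτD : satClause τ D
  · exact ⟨τ, fun E hE => if hED : E = D then hED ▸ hτD else hτ' E hE hED⟩
  refine ⟨Function.update τ l.1 l.2, fun E hE => ?_⟩
  by_cases hED : E = D
  · exact hED ▸ satClause_update_of_mem hD.1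
  by_cases hlE : l.neg ∈ E
  · obtain ⟨m, hmE, hml, hmD⟩ := hD.2 E hE hlE
    have hτm : τ m.1 = m.2 := Lit.eval_of_not_eval_neg fun h => hτD ⟨m.neg, hmD, h⟩
    exact ⟨m, hmE, update_eval_of_ne_neg hτm hml⟩
  · exact satClause_update_of_neg_notMem (hτ' E hE hED) hlE

section ReplaceNeg

variable (a : Lit) (f : Clause → Lit)

def replaceNeg (D : Clause) : Clause :=
  if a.neg ∈ D then insert (f D) (D.erase a.neg) else D

/-- When `a` occurs only in `C₀` and `f D ∈ C₀ \ {a}`, each new clause subsumes the resolvent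
of `C₀` and `D` on `a`. -/
def elimPivot (F : CNF) (C₀ : Clause) : CNF :=
  (F.erase C₀).image (replaceNeg a f)

variable {a f}

lemma replaceNeg_of_notMem {D : Clause} (h : a.neg ∉ D) : replaceNeg a f D = D :=
  if_neg h

lemma replaceNeg_of_mem {D : Clause} (h : a.neg ∈ D) :
    replaceNeg a f D = insert (f D) (D.erase a.neg) :=
  if_pos h

lemma eq_of_mem_replaceNeg_of_notMem {D : Clause} {l : Lit} (hl : l ∈ replaceNeg a f D)
    (hlD : l ∉ D) : a.neg ∈ D ∧ f D = l := by
  by_cases h : a.neg ∈ D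
  · rw [replaceNeg_of_mem h] at hl
    rcases mem_insert.1 hl with hl | hl
    · exact ⟨h, hl.symm⟩
    · exact absurd (mem_of_mem_erase hl) hlD
  · rw [replaceNeg_of_notMem h] at hl
    exact absurd hl hlD

variable {F : CNF} {C₀ : Clause}

lemma card_elimPivot_lt (hC₀ : C₀ ∈ F) : (elimPivot a f F C₀).card < F.card :=
  card_image_le.trans_lt (card_erase_lt_of_mem hC₀)

/-- Each new occurrence of `f D` is charged to `C₀ ∋ f D`, which is dropped. -/
lemma ldeg_elimPivot_le (hC₀ : C₀ ∈ F) (hf : ∀ D ∈ F.erase C₀, a.neg ∈ D → f D ∈ C₀)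
    (hinj : Set.InjOn f ((F.erase C₀).filter (a.neg ∈ ·))) (l : Lit) :
    ldeg (elimPivot a f F C₀) l ≤ ldeg F l := by
  unfold ldeg elimPivot
  rw [filter_image]
  refine card_image_le.trans (card_le_card_of_injOn (fun D => if l ∈ D then D else C₀) ?_ ?_)
  · intro D hD
    obtain ⟨hDF, hlD⟩ := mem_filter.1 hD
    simp only [mem_coe, mem_filter]
    split_ifs with h
    · exact ⟨mem_of_mem_erase hDF, h⟩
    · obtain ⟨haD, rfl⟩ := eq_of_mem_replaceNeg_of_notMem hlD h
      exact ⟨hC₀, hf D hDF haD⟩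
  · intro D₁ hD₁ D₂ hD₂ h
    simp only [mem_coe, mem_filter] at hD₁ hD₂ h
    split_ifs at h with h₁ h₂ h₂
    · exact h
    · exact absurd h (ne_of_mem_erase hD₁.1)
    · exact absurd h.symm (ne_of_mem_erase hD₂.1)
    · obtain ⟨haD₁, hf₁⟩ := eq_of_mem_replaceNeg_of_notMem hD₁.2 h₁
      obtain ⟨haD₂, hf₂⟩ := eq_of_mem_replaceNeg_of_notMem hD₂.2 h₂
      exact hinj (mem_coe.2 (mem_filter.2 ⟨hD₁.1, haD₁⟩)) (mem_coe.2 (mem_filter.2 ⟨hD₂.1, haD₂⟩))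
        (hf₁.trans hf₂.symm)

lemma isKCNF_elimPivot {k : ℕ} (hF : isKCNF k F)
    (hfresh : ∀ D ∈ F.erase C₀, a.neg ∈ D → f D ∉ D ∧ (f D).neg ∉ D) :
    isKCNF k (elimPivot a f F C₀) := by
  simp only [isKCNF, elimPivot, forall_mem_image]
  intro D hD
  obtain ⟨hDnt, hDk⟩ := hF D (mem_of_mem_erase hD)
  by_cases haD : a.neg ∈ D
  · obtain ⟨hfD, hnfD⟩ := hfresh D hD haD
    rw [replaceNeg_of_mem haD]
    refine ⟨(hDnt.mono (erase_subset _ _)).insert fun h => hnfD (mem_of_mem_erase h), ?_⟩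
    rw [card_insert_of_notMem fun h => hfD (mem_of_mem_erase h), card_erase_add_one haD, hDk]
  · rw [replaceNeg_of_notMem haD]
    exact ⟨hDnt, hDk⟩

/-- If some `f D` is true, make `¬a` true (and `C₀` is satisfied by `f D`); otherwise every
`D ∋ ¬a` is satisfied by another literal, and we make `a` true. -/
lemma Satisfiable.of_elimPivot (haC₀ : a ∈ C₀) (ha : ∀ E ∈ F, a ∈ E → E = C₀)
    (hf : ∀ D ∈ F.erase C₀, a.neg ∈ D → f D ∈ C₀ ∧ f D ≠ a)
    (h : Satisfiable (elimPivot a f F C₀)) : Satisfiable F := by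
  obtain ⟨τ, hτ⟩ := h
  replace hτ : ∀ D ∈ F.erase C₀, satClause τ (replaceNeg a f D) := fun D hD =>
    hτ _ (mem_image_of_mem _ hD)
  have hτ_of_notMem : ∀ E ∈ F, E ≠ C₀ → a.neg ∉ E → satClause τ E := fun E hE hE₀ haE => by
    simpa only [replaceNeg_of_notMem haE] using hτ E (mem_erase.2 ⟨hE₀, hE⟩)
  by_cases hB : ∃ D ∈ F.erase C₀, a.neg ∈ D ∧ τ (f D).1 = (f D).2
  · obtain ⟨D, hD, haD, hτfD⟩ := hB
    obtain ⟨hfDC₀, hfDa⟩ := hf D hD haD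
    refine ⟨Function.update τ a.neg.1 a.neg.2, fun E hE => ?_⟩
    by_cases hE₀ : E = C₀
    · exact ⟨f D, hE₀ ▸ hfDC₀, update_eval_of_ne_neg hτfD (a.neg_neg.symm ▸ hfDa)⟩
    by_cases haE : a.neg ∈ E
    · exact satClause_update_of_mem haE
    · refine satClause_update_of_neg_notMem (hτ_of_notMem E hE hE₀ haE) ?_
      rw [a.neg_neg]
      exact fun h => hE₀ (ha E hE h)
  · push Not at hB
    refine ⟨Function.update τ a.1 a.2, fun E hE => ?_⟩
    by_cases hE₀ : E = C₀
    · exact hE₀ ▸ satClause_update_of_mem haC₀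
    by_cases haE : a.neg ∈ E
    · have hE' : E ∈ F.erase C₀ := mem_erase.2 ⟨hE₀, hE⟩
      obtain ⟨m, hm, hτm⟩ := hτ E hE'
      rw [replaceNeg_of_mem haE] at hm
      rcases mem_insert.1 hm with rfl | hm
      · exact absurd hτm (hB E hE' haE)
      · exact ⟨m, mem_of_mem_erase hm, update_eval_of_ne_neg hτm (ne_of_mem_erase hm)⟩
    · exact satClause_update_of_neg_notMem (hτ_of_notMem E hE hE₀ haE) haE

end ReplaceNeg

section Smallest

variable {k p q : ℕ} {F : CNF} (hF : KPQ k p q F) (hunsat : ¬Satisfiable F)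
  (hmin : ∀ G : CNF, KPQ k p q G → ¬Satisfiable G → F.card ≤ G.card)
include hF hunsat hmin

/-- A clause containing `¬a` and `¬b` is blocked on `¬a`, since the only clause containing `a`
also contains `b`. -/
lemma not_neg_mem_and_neg_mem {C₀ : Clause} (hC₀ : C₀ ∈ F) {a b : Lit} (haC₀ : a ∈ C₀)
    (hbC₀ : b ∈ C₀) (hab : a ≠ b) (ha : ldeg F a = 1) {D : Clause} (hD : D ∈ F) :
    ¬(a.neg ∈ D ∧ b.neg ∈ D) := by
  rintro ⟨haD, hbD⟩
  have hblocked : BlockedOn F D a.neg := by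
    refine ⟨haD, fun E hE haE => ⟨b, ?_, ?_, hbD⟩⟩
    · rw [a.neg_neg] at haE
      exact eq_of_ldeg_eq_one ha hC₀ haC₀ hE haE ▸ hbC₀
    · rw [a.neg_neg]
      exact hab.symm
  have hG : KPQ k p q (F.erase D) :=
    hF.of_ldeg_le (hF.1.mono (erase_subset _ _)) (ldeg_mono (erase_subset _ _))
  exact (card_erase_lt_of_mem hD).not_ge
    (hmin _ hG fun h => hunsat (h.of_erase_of_blockedOn hblocked))

/-- If `¬a` occurred in fewer than `k` clauses, these could be matched injectively to the other
literals of `C₀`, and `elimPivot` along this matching would be a smaller unsatisfiable formula of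
the class. -/
lemma le_ldeg_neg {C₀ : Clause} (hC₀ : C₀ ∈ F) (honce : ∀ m ∈ C₀, ldeg F m = 1) {a : Lit}
    (haC₀ : a ∈ C₀) : k ≤ ldeg F a.neg := by
  by_contra! hlt
  set S := (F.erase C₀).filter (a.neg ∈ ·)
  have hS : S.card ≤ (C₀.erase a).card := by
    have : S.card ≤ ldeg F a.neg := card_le_card (filter_subset_filter _ (erase_subset _ _))
    rw [card_erase_of_mem haC₀, (hF.1 C₀ hC₀).2]
    omega
  obtain ⟨f, hfS, hinj⟩ := (S : Set Clause).toFinite.exists_injOn_of_encard_le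
    (t := (C₀.erase a : Set Lit)) (by simpa only [Set.encard_coe_eq_coe_finsetCard, Nat.cast_le])
  have hf : ∀ D ∈ F.erase C₀, a.neg ∈ D → f D ∈ C₀.erase a := fun D hD haD =>
    hfS (mem_coe.2 (mem_filter.2 ⟨hD, haD⟩))
  have hfresh : ∀ D ∈ F.erase C₀, a.neg ∈ D → f D ∉ D ∧ (f D).neg ∉ D := by
    intro D hD haD
    obtain ⟨hfDa, hfDC₀⟩ := mem_erase.1 (hf D hD haD)
    refine ⟨fun h => ne_of_mem_erase hD ?_, fun h => ?_⟩
    · exact eq_of_ldeg_eq_one (honce _ hfDC₀) hC₀ hfDC₀ (mem_of_mem_erase hD) h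
    · exact not_neg_mem_and_neg_mem hF hunsat hmin hC₀ haC₀ hfDC₀ hfDa.symm (honce a haC₀)
        (mem_of_mem_erase hD) ⟨haD, h⟩
  have hG : KPQ k p q (elimPivot a f F C₀) :=
    hF.of_ldeg_le (isKCNF_elimPivot hF.1 hfresh)
      (ldeg_elimPivot_le hC₀ (fun D hD haD => mem_of_mem_erase (hf D hD haD)) hinj)
  have hGunsat : ¬Satisfiable (elimPivot a f F C₀) := fun h =>
    hunsat <| h.of_elimPivot haC₀
      (fun E hE haE => eq_of_ldeg_eq_one (honce a haC₀) hC₀ haC₀ hE haE)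
      fun D hD haD => (mem_erase.1 (hf D hD haD)).symm
  exact (card_elimPivot_lt hC₀).not_ge (hmin _ hG hGunsat)

end Smallest

theorem stmt11_general (q : ℕ) (F : CNF) (hF : KPQ 3 1 q F)
    (hunsat : ¬ Satisfiable F)
    (hmin : ∀ G : CNF, KPQ 3 1 q G → ¬ Satisfiable G → F.card ≤ G.card)
    (x : Fin 3 → Lit) (hinj : Function.Injective x)
    (hC : ({x 0, x 1, x 2} : Clause) ∈ F)
    (hsing : ∀ i, ldeg F (x i) = 1) :
    (∀ D ∈ F, ∀ i j : Fin 3, i ≠ j → ¬(Lit.neg (x i) ∈ D ∧ Lit.neg (x j) ∈ D)) ∧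
    (∀ i, 3 ≤ ldeg F (Lit.neg (x i))) := by
  have hmem : ∀ i, x i ∈ ({x 0, x 1, x 2} : Clause) := by
    intro i
    fin_cases i <;> simp
  have honce : ∀ m ∈ ({x 0, x 1, x 2} : Clause), ldeg F m = 1 := by
    simp only [mem_insert, mem_singleton, forall_eq_or_imp, forall_eq]
    exact ⟨hsing 0, hsing 1, hsing 2⟩
  exact ⟨fun D hD i j hij => not_neg_mem_and_neg_mem hF hunsat hmin hC (hmem i) (hmem j)
      (hinj.ne hij) (hsing i) hD,
    fun i => le_ldeg_neg hF hunsat hmin hC honce (hmem i)⟩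

theorem stmt11 (q : ℕ) (hq : 3 ≤ q) (F : CNF) (hF : KPQ 3 1 q F)
    (hunsat : ¬ Satisfiable F)
    (hmin : ∀ G : CNF, KPQ 3 1 q G → ¬ Satisfiable G → F.card ≤ G.card)
    (x : Fin 3 → Lit) (hinj : Function.Injective x)
    (hC : ({x 0, x 1, x 2} : Clause) ∈ F)
    (hsing : ∀ i, ldeg F (x i) = 1) :
    (∀ D ∈ F, ∀ i j : Fin 3, i ≠ j → ¬(Lit.neg (x i) ∈ D ∧ Lit.neg (x j) ∈ D)) ∧
    (∀ i, 3 ≤ ldeg F (Lit.neg (x i))) :=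
  stmt11_general q F hF hunsat hmin x hinj hC hsing
end

section
/- In a minimum-size unsatisfiable (3,4)-formula F, for every variable x of degree 3, the three clauses containing x share a common literal a distinct from x and ¬x: they have the form {x,a,b}, {¬x,a,c}, {¬x,a,d} (up to renaming the polarity of x). -/
/-!
Write the occurrences of `x` as `P = {x^ε} ∪ B₁`, `N₂ = {x^¬ε} ∪ B₂`, `N₃ = {x^¬ε} ∪ B₃` (a pure `x`
is excluded by simply deleting its clauses). If the `Bᵢ` had no common literal, Davis–Putnam
elimination of `x` could be carried out with only two 3-clauses: when `B₁ = Bᵢ` by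
`B₁ ∪ {y}, B₁ ∪ {¬y}` for a fresh `y`, and otherwise by `B₂ ∪ {u}, B₃ ∪ {w}` where `B₁ = {u, w}`.
The result is again an unsatisfiable (3,4)-formula, since its literal occurrences are among those
of the removed clauses or fresh, but it has fewer clauses.
-/

open Finset

lemma satClause_mono {τ : ℕ → Bool} {C D : Clause} (h : C ⊆ D) : satClause τ C → satClause τ D
  | ⟨l, hl, he⟩ => ⟨l, h hl, he⟩

lemma satClause_of_not_nontaut {τ : ℕ → Bool} {C : Clause} (h : ¬ C.nontaut) : satClause τ C := by
  simp only [Clause.nontaut, not_forall, not_not] at h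
  obtain ⟨⟨v, c⟩, hl, hnl⟩ := h
  by_cases he : τ v = c
  · exact ⟨_, hl, he⟩
  · exact ⟨_, hnl, by cases c <;> simpa [Lit.neg] using he⟩

lemma satClause_of_insert_of_insert {τ : ℕ → Bool} {C : Clause} {y : ℕ} {b : Bool}
    (h₁ : satClause τ (insert (y, b) C)) (h₂ : satClause τ (insert (y, !b) C)) :
    satClause τ C := by
  obtain ⟨l, hl, he⟩ := h₁
  obtain ⟨m, hm, hme⟩ := h₂
  rcases mem_insert.1 hl with rfl | hl
  · rcases mem_insert.1 hm with rfl | hm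
    · simp_all
    · exact ⟨m, hm, hme⟩
  · exact ⟨l, hl, he⟩

lemma satClause_update_of_mem_s15 {τ : ℕ → Bool} {C : Clause} {x : ℕ} {b : Bool} (h : (x, b) ∈ C) :
    satClause (Function.update τ x b) C :=
  ⟨(x, b), h, by simp⟩

lemma satClause_update_of_erase {τ : ℕ → Bool} {C : Clause} {x : ℕ} {b : Bool}
    (h : satClause τ (C.erase (x, !b))) : satClause (Function.update τ x b) C := by
  obtain ⟨⟨v, c⟩, hl, he⟩ := h
  obtain ⟨hne, hlC⟩ := mem_erase.1 hl
  refine ⟨(v, c), hlC, ?_⟩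
  by_cases hv : v = x
  · subst hv
    cases b <;> cases c <;> simp_all
  · simpa [Function.update_of_ne hv] using he

lemma mem_occ_iff {F : CNF} {x : ℕ} {C : Clause} (ε : Bool) :
    C ∈ occ F x ↔ C ∈ F ∧ ((x, ε) ∈ C ∨ (x, !ε) ∈ C) := by
  cases ε <;> simp [occ, or_comm]

lemma occ_eq_union (F : CNF) (x : ℕ) (ε : Bool) :
    occ F x = F.filter (fun C => (x, ε) ∈ C) ∪ F.filter (fun C => (x, !ε) ∈ C) := by
  ext C
  rw [mem_occ_iff ε, mem_union, mem_filter, mem_filter]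
  tauto

lemma vdeg_eq_ldeg_add {F : CNF} (hnt : ∀ C ∈ F, C.nontaut) (x : ℕ) (ε : Bool) :
    vdeg F x = ldeg F (x, ε) + ldeg F (x, !ε) := by
  rw [vdeg, occ_eq_union F x ε, card_union_of_disjoint]
  · rfl
  · exact disjoint_filter.2 fun C hC h₁ h₂ => hnt C hC _ h₁ h₂

lemma mem_of_filter_eq {F S : CNF} {l : Lit} {C : Clause} (h : F.filter (fun D => l ∈ D) = S)
    (hC : C ∈ S) : C ∈ F ∧ l ∈ C := by
  rw [← h] at hC
  exact mem_filter.1 hC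

lemma occ_eq_insert {F : CNF} {x : ℕ} {ε : Bool} {P N₂ N₃ : Clause}
    (hP : F.filter (fun C => (x, ε) ∈ C) = {P}) (hN : F.filter (fun C => (x, !ε) ∈ C) = {N₂, N₃}) :
    occ F x = {P, N₂, N₃} := by
  rw [occ_eq_union F x ε, hP, hN, ← insert_eq]

lemma ne_of_mem_of_neg_mem {C D : Clause} {l : Lit} (hD : D.nontaut) (hC : l ∈ C)
    (hD' : l.neg ∈ D) : C ≠ D := by
  rintro rfl
  exact hD l hC hD'

lemma satisfiable_of_update {F : CNF} {x : ℕ} {τ : ℕ → Bool} (b : Bool)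
    (hrest : satCNF τ (F \ occ F x)) (hocc : ∀ C ∈ occ F x, satClause (Function.update τ x b) C) :
    Satisfiable F := by
  refine ⟨Function.update τ x b, fun C hC => ?_⟩
  by_cases hCx : C ∈ occ F x
  · exact hocc C hCx
  obtain ⟨⟨v, c⟩, hl, he⟩ := hrest C (mem_sdiff.2 ⟨hC, hCx⟩)
  have hv : v ≠ x := by
    rintro rfl
    exact hCx ((mem_occ_iff c).2 ⟨hC, Or.inl hl⟩)
  exact ⟨(v, c), hl, by simpa [Function.update_of_ne hv] using he⟩

lemma satisfiable_of_pure {F : CNF} {x : ℕ} {τ : ℕ → Bool} {ε : Bool}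
    (hpure : ∀ C ∈ occ F x, (x, ε) ∈ C) (hrest : satCNF τ (F \ occ F x)) : Satisfiable F :=
  satisfiable_of_update ε hrest fun C hC => satClause_update_of_mem_s15 (hpure C hC)

lemma satisfiable_of_resolvents {F : CNF} {x : ℕ} {τ : ℕ → Bool} {ε : Bool} {P : Clause}
    (hP : F.filter (fun C => (x, ε) ∈ C) = {P}) (hrest : satCNF τ (F \ occ F x))
    (hres : ∀ N ∈ F, (x, !ε) ∈ N → satClause τ (P.erase (x, ε) ∪ N.erase (x, !ε))) :
    Satisfiable F := by
  have hpos : ∀ C ∈ F, (x, ε) ∈ C → C = P := fun C hC hx =>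
    mem_singleton.1 (hP ▸ mem_filter.2 ⟨hC, hx⟩)
  by_cases hB : satClause τ (P.erase (x, ε))
  · refine satisfiable_of_update (!ε) hrest fun C hC => ?_
    obtain ⟨hCF, hx | hx⟩ := (mem_occ_iff ε).1 hC
    · rw [hpos C hCF hx]
      exact satClause_update_of_erase (by simpa using hB)
    · exact satClause_update_of_mem_s15 hx
  · refine satisfiable_of_update ε hrest fun C hC => ?_
    obtain ⟨hCF, hx | hx⟩ := (mem_occ_iff ε).1 hC
    · exact satClause_update_of_mem_s15 hx
    · obtain ⟨l, hl, he⟩ := hres C hCF hx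
      rcases mem_union.1 hl with hl | hl
      · exact absurd ⟨l, hl, he⟩ hB
      · exact satClause_update_of_erase ⟨l, hl, he⟩

lemma mem_vars {F : CNF} {v : ℕ} : v ∈ vars F ↔ ∃ C ∈ F, ∃ l ∈ C, l.1 = v := by
  simp [vars, Finset.mem_sup]

lemma vdeg_eq_zero_of_notMem_vars {F : CNF} {v : ℕ} (hv : v ∉ vars F) : vdeg F v = 0 := by
  refine card_eq_zero.2 (filter_eq_empty_iff.2 fun C hC h => hv (mem_vars.2 ?_))
  rcases h with h | h
  · exact ⟨C, hC, _, h, rfl⟩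
  · exact ⟨C, hC, _, h, rfl⟩

lemma vdeg_mono {F G : CNF} (h : F ⊆ G) (v : ℕ) : vdeg F v ≤ vdeg G v :=
  card_le_card (filter_subset_filter _ h)

lemma vdeg_union_le (F G : CNF) (v : ℕ) : vdeg (F ∪ G) v ≤ vdeg F v + vdeg G v := by
  simp only [vdeg, occ, filter_union]
  exact card_union_le _ _

lemma vdeg_sdiff_add {F S : CNF} (hS : S ⊆ F) (v : ℕ) : vdeg (F \ S) v + vdeg S v = vdeg F v := by
  simp only [vdeg, occ]
  rw [← card_union_of_disjoint (disjoint_filter_filter sdiff_disjoint), ← filter_union,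
    sdiff_union_of_subset hS]

def litOcc (F : CNF) : Multiset Lit := ∑ C ∈ F, C.val

lemma litOcc_mono {F G : CNF} (h : F ⊆ G) : litOcc F ≤ litOcc G :=
  sum_le_sum_of_subset h

lemma litOcc_pair_le (C D : Clause) : litOcc {C, D} ≤ C.val + D.val := by
  by_cases h : C = D
  · subst h
    simp [litOcc]
  · rw [litOcc, sum_pair h]

lemma countP_litOcc (F : CNF) (v : ℕ) :
    (litOcc F).countP (·.1 = v) = ∑ C ∈ F, C.val.countP (·.1 = v) :=
  map_sum (Multiset.countPAddMonoidHom _) _ _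

lemma countP_fst_pos_iff {C : Clause} {v : ℕ} :
    0 < C.val.countP (·.1 = v) ↔ (v, true) ∈ C ∨ (v, false) ∈ C := by
  rw [Multiset.countP_pos]
  constructor
  · rintro ⟨⟨w, c⟩, hl, rfl⟩
    cases c
    · exact Or.inr hl
    · exact Or.inl hl
  · rintro (h | h)
    · exact ⟨_, h, rfl⟩
    · exact ⟨_, h, rfl⟩

lemma countP_fst_le_one {C : Clause} (hC : C.nontaut) (v : ℕ) : C.val.countP (·.1 = v) ≤ 1 := by
  rw [Multiset.countP_eq_card_filter, ← filter_val, card_val]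
  refine card_le_one.2 fun ⟨w, c⟩ hl ⟨w', c'⟩ hl' => ?_
  obtain ⟨hlC, rfl : w = v⟩ := mem_filter.1 hl
  obtain ⟨hlC', rfl : w' = w⟩ := mem_filter.1 hl'
  by_contra hne
  have hc : c' = !c := by cases c <;> cases c' <;> simp_all
  subst hc
  exact hC _ hlC hlC'

lemma vdeg_le_countP_litOcc (F : CNF) (v : ℕ) : vdeg F v ≤ (litOcc F).countP (·.1 = v) := by
  rw [vdeg, occ, card_filter, countP_litOcc]
  refine sum_le_sum fun C _ => ?_
  split_ifs with h
  · exact countP_fst_pos_iff.2 h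
  · exact Nat.zero_le _

lemma countP_litOcc_le_vdeg {F : CNF} (hnt : ∀ C ∈ F, C.nontaut) (v : ℕ) :
    (litOcc F).countP (·.1 = v) ≤ vdeg F v := by
  rw [vdeg, occ, card_filter, countP_litOcc]
  refine sum_le_sum fun C hC => ?_
  split_ifs with h
  · exact countP_fst_le_one (hnt C hC) v
  · exact Nat.le_zero.2 (Nat.eq_zero_of_not_pos (mt countP_fst_pos_iff.1 h))

lemma vdeg_le_of_litOcc_le {R S : CNF} {M : Multiset Lit} {v : ℕ} (hS : ∀ C ∈ S, C.nontaut)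
    (hlit : litOcc R ≤ litOcc S + M) (hM : ∀ l ∈ M, l.1 ≠ v) : vdeg R v ≤ vdeg S v := calc
  vdeg R v ≤ (litOcc R).countP (·.1 = v) := vdeg_le_countP_litOcc R v
  _ ≤ (litOcc S + M).countP (·.1 = v) := Multiset.countP_le_of_le _ hlit
  _ = (litOcc S).countP (·.1 = v) := by
    rw [Multiset.countP_add, add_eq_left, Multiset.countP_eq_zero]
    exact hM
  _ ≤ vdeg S v := countP_litOcc_le_vdeg hS v

lemma Finset.card_erase_eq_two {α : Type*} [DecidableEq α] {s : Finset α} {a : α}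
    (hs : s.card = 3) (ha : a ∈ s) : (s.erase a).card = 2 := by
  rw [card_erase_of_mem ha, hs]

lemma Finset.exists_eq_triple_of_mem_erase {α : Type*} [DecidableEq α] {s : Finset α} {a b : α}
    (hs : s.card = 3) (ha : a ∈ s) (hb : b ∈ s.erase a) : ∃ c, s = {a, b, c} := by
  have hcard : ((s.erase a).erase b).card = 1 := by
    rw [card_erase_of_mem hb, card_erase_eq_two hs ha]
  obtain ⟨c, hc⟩ := card_eq_one.1 hcard
  exact ⟨c, by rw [← hc, insert_erase hb, insert_erase ha]⟩

lemma Finset.exists_eq_pair_notMem_notMem {α : Type*} [DecidableEq α] {B₁ B₂ B₃ : Finset α}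
    (h₁ : B₁.card = 2) (h₂ : B₂.card ≤ 2) (h₃ : B₃.card ≤ 2) (h₁₂ : B₁ ≠ B₂) (h₁₃ : B₁ ≠ B₃)
    (h : ∀ a ∈ B₁, a ∈ B₂ → a ∉ B₃) : ∃ u w, B₁ = {u, w} ∧ u ∉ B₂ ∧ w ∉ B₃ := by
  obtain ⟨p, q, hpq, rfl⟩ := card_eq_two.1 h₁
  have hsub : ∀ B : Finset α, B.card ≤ 2 → {p, q} ≠ B → p ∈ B → q ∉ B := fun B hB hne hp hq =>
    hne (eq_of_subset_of_card_le (by simp [insert_subset_iff, hp, hq]) (by rw [h₁]; exact hB))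
  by_cases hp₂ : p ∈ B₂
  · exact ⟨q, p, pair_comm _ _, hsub B₂ h₂ h₁₂ hp₂, h p (by simp) hp₂⟩
  by_cases hq₃ : q ∈ B₃
  · refine ⟨q, p, pair_comm _ _, fun hq₂ => h q (by simp) hq₂ hq₃, fun hp₃ => ?_⟩
    exact hsub B₃ h₃ h₁₃ hp₃ hq₃
  · exact ⟨p, q, rfl, hp₂, hq₃⟩

structure MinSizeUnsat34 (F : CNF) : Prop where
  ks : KS 3 4 F
  unsat : ¬ Satisfiable F
  min : ∀ G : CNF, KS 3 4 G → ¬ Satisfiable G → F.card ≤ G.card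

namespace MinSizeUnsat34

variable {F : CNF}

lemma nontaut (hF : MinSizeUnsat34 F) {C : Clause} (hC : C ∈ F) : C.nontaut := (hF.ks.1 C hC).1

lemma card_eq_three (hF : MinSizeUnsat34 F) {C : Clause} (hC : C ∈ F) : C.card = 3 :=
  (hF.ks.1 C hC).2

theorem false_of_replace_occ (hF : MinSizeUnsat34 F) {x : ℕ} {R : CNF} {M : Multiset Lit}
    (hR : ∀ C ∈ R, C.card = 3) (hcard : R.card < vdeg F x)
    (hlit : litOcc R ≤ litOcc (occ F x) + M) (hM : ∀ l ∈ M, l.1 ∉ vars F)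
    (hsem : ∀ τ, satCNF τ (F \ occ F x) → satCNF τ R → Satisfiable F) : False := by
  have hoccF : occ F x ⊆ F := filter_subset _ _
  set G : CNF := F \ occ F x ∪ R.filter Clause.nontaut
  have hGunsat : ¬ Satisfiable G := by
    rintro ⟨τ, hτ⟩
    refine hF.unsat (hsem τ (fun C hC => hτ C (mem_union_left _ hC)) fun C hC => ?_)
    by_cases hnt : C.nontaut
    · exact hτ C (mem_union_right _ (mem_filter.2 ⟨hC, hnt⟩))
    · exact satClause_of_not_nontaut hnt
  have hGdeg : ∀ v, vdeg G v ≤ 4 := by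
    intro v
    have hsplit := vdeg_sdiff_add hoccF v
    have hG : vdeg G v ≤ vdeg (F \ occ F x) v + vdeg R v :=
      (vdeg_union_le _ _ v).trans (Nat.add_le_add_left (vdeg_mono (filter_subset _ _) v) _)
    have hFv := hF.ks.2 v
    by_cases hv : v ∈ vars F
    · have hRv : vdeg R v ≤ vdeg (occ F x) v :=
        vdeg_le_of_litOcc_le (fun C hC => hF.nontaut (hoccF hC)) hlit
          fun l hl h => hM l hl (h ▸ hv)
      omega
    · have hRv : vdeg R v ≤ R.card := card_filter_le _ _
      have := vdeg_eq_zero_of_notMem_vars hv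
      have := hF.ks.2 x
      omega
  have hGks : KS 3 4 G := by
    refine ⟨fun C hC => ?_, hGdeg⟩
    rcases mem_union.1 hC with hC | hC
    · exact hF.ks.1 C (mem_sdiff.1 hC).1
    · obtain ⟨hCR, hnt⟩ := mem_filter.1 hC
      exact ⟨hnt, hR C hCR⟩
  have hmin := hF.min G hGks hGunsat
  have hGcard : G.card ≤ (F \ occ F x).card + R.card :=
    (card_union_le _ _).trans (Nat.add_le_add_left (card_filter_le _ _) _)
  have := card_sdiff_add_card_eq_card hoccF
  unfold vdeg at hcard
  omega

lemma ldeg_ne_zero (hF : MinSizeUnsat34 F) {x : ℕ} (hx : vdeg F x ≠ 0) (ε : Bool) :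
    ldeg F (x, ε) ≠ 0 := by
  intro h0
  have hpure : ∀ C ∈ occ F x, (x, !ε) ∈ C := by
    intro C hC
    obtain ⟨hCF, hx | hx⟩ := (mem_occ_iff ε).1 hC
    · exact absurd (card_eq_zero.1 h0 ▸ mem_filter.2 ⟨hCF, hx⟩) (notMem_empty C)
    · exact hx
  refine hF.false_of_replace_occ (R := ∅) (M := 0) (by simp) (by simpa [Nat.pos_iff_ne_zero])
    (by simp [litOcc]) (by simp) fun τ hrest _ => satisfiable_of_pure hpure hrest

lemma erase_ne_erase (hF : MinSizeUnsat34 F) {x : ℕ} {ε : Bool} {P N : Clause}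
    (hx : 2 < vdeg F x) (hP : F.filter (fun C => (x, ε) ∈ C) = {P}) (hNF : N ∈ F)
    (hxN : (x, !ε) ∈ N) : P.erase (x, ε) ≠ N.erase (x, !ε) := by
  intro hBN
  have hPF : P ∈ F ∧ (x, ε) ∈ P := mem_of_filter_eq hP (mem_singleton_self P)
  set B := P.erase (x, ε)
  obtain ⟨y, hy⟩ := Infinite.exists_notMem_finset (vars F)
  have hyB : ∀ b, (y, b) ∉ B := fun b hb =>
    hy (mem_vars.2 ⟨P, hPF.1, _, mem_of_mem_erase hb, rfl⟩)
  have hBcard : B.card = 2 := card_erase_eq_two (hF.card_eq_three hPF.1) hPF.2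
  have hPN : P ≠ N := ne_of_mem_of_neg_mem (hF.nontaut hNF) hPF.2 hxN
  have hPNocc : {P, N} ⊆ occ F x := by
    simp [insert_subset_iff, mem_occ_iff ε, hPF, hNF, hxN]
  refine hF.false_of_replace_occ (R := {insert (y, true) B, insert (y, false) B})
    (M := (y, true) ::ₘ {(y, false)}) ?_ (card_le_two.trans_lt hx) ?_ (by simpa using hy) ?_
  · simp [card_insert_of_notMem (hyB _), hBcard]
  · calc litOcc {insert (y, true) B, insert (y, false) B}
        ≤ (insert (y, true) B).val + (insert (y, false) B).val := litOcc_pair_le _ _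
      _ = B.val + B.val + (y, true) ::ₘ {(y, false)} := by
        rw [insert_val_of_notMem (hyB _), insert_val_of_notMem (hyB _), ← Multiset.singleton_add,
          ← Multiset.singleton_add, ← Multiset.singleton_add]
        abel
      _ ≤ P.val + N.val + (y, true) ::ₘ {(y, false)} := by
        gcongr
        · exact val_le_iff.2 (erase_subset _ _)
        · rw [hBN]; exact val_le_iff.2 (erase_subset _ _)
      _ ≤ litOcc (occ F x) + (y, true) ::ₘ {(y, false)} := by
        gcongr
        rw [← sum_pair hPN]
        exact litOcc_mono hPNocc
  · intro τ hrest hR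
    have hB : satClause τ B := satClause_of_insert_of_insert (b := true)
      (hR (insert (y, true) B) (by simp)) (hR (insert (y, false) B) (by simp))
    exact satisfiable_of_resolvents hP hrest fun _ _ _ => satClause_mono subset_union_left hB

lemma false_of_erase_eq_pair (hF : MinSizeUnsat34 F) {x : ℕ} {ε : Bool} {P N₂ N₃ : Clause}
    {u w : Lit} (hx : 2 < vdeg F x) (hP : F.filter (fun C => (x, ε) ∈ C) = {P})
    (hN : F.filter (fun C => (x, !ε) ∈ C) = {N₂, N₃}) (hN₂₃ : N₂ ≠ N₃)
    (hB : P.erase (x, ε) = {u, w}) (hu : u ∉ N₂.erase (x, !ε)) (hw : w ∉ N₃.erase (x, !ε)) :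
    False := by
  have hPF : P ∈ F ∧ (x, ε) ∈ P := mem_of_filter_eq hP (mem_singleton_self P)
  have hN₂F : N₂ ∈ F ∧ (x, !ε) ∈ N₂ := mem_of_filter_eq hN (by simp)
  have hN₃F : N₃ ∈ F ∧ (x, !ε) ∈ N₃ := mem_of_filter_eq hN (by simp)
  set B₂ := N₂.erase (x, !ε)
  set B₃ := N₃.erase (x, !ε)
  have hB₂ : B₂.card = 2 := card_erase_eq_two (hF.card_eq_three hN₂F.1) hN₂F.2
  have hB₃ : B₃.card = 2 := card_erase_eq_two (hF.card_eq_three hN₃F.1) hN₃F.2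
  have huw : u ≠ w := by
    rintro rfl
    simpa [hB] using card_erase_eq_two (hF.card_eq_three hPF.1) hPF.2
  have hPN : P ∉ ({N₂, N₃} : CNF) := by
    simp only [mem_insert, mem_singleton, not_or]
    exact ⟨ne_of_mem_of_neg_mem (hF.nontaut hN₂F.1) hPF.2 hN₂F.2,
      ne_of_mem_of_neg_mem (hF.nontaut hN₃F.1) hPF.2 hN₃F.2⟩
  refine hF.false_of_replace_occ (R := {insert u B₂, insert w B₃}) (M := 0) ?_
    (card_le_two.trans_lt hx) ?_ (by simp) ?_
  · simp [card_insert_of_notMem hu, card_insert_of_notMem hw, hB₂, hB₃]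
  · calc litOcc {insert u B₂, insert w B₃}
        ≤ (insert u B₂).val + (insert w B₃).val := litOcc_pair_le _ _
      _ = (P.erase (x, ε)).val + B₂.val + B₃.val := by
        rw [insert_val_of_notMem hu, insert_val_of_notMem hw, hB,
          insert_val_of_notMem (by simpa using huw), ← Multiset.singleton_add,
          ← Multiset.singleton_add, ← Multiset.singleton_add, singleton_val]
        abel
      _ ≤ P.val + N₂.val + N₃.val := by
        gcongr <;> exact val_le_iff.2 (erase_subset _ _)
      _ = litOcc (occ F x) + 0 := by
        rw [occ_eq_insert hP hN, litOcc, sum_insert hPN, sum_pair hN₂₃, add_zero, add_assoc]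
  · intro τ hrest hR
    refine satisfiable_of_resolvents hP hrest fun N hNF hxN => ?_
    rcases mem_insert.1 (hN ▸ mem_filter.2 ⟨hNF, hxN⟩) with rfl | hN
    · exact satClause_mono (insert_subset (by simp [hB]) subset_union_right)
        (hR (insert u B₂) (by simp))
    · rw [mem_singleton.1 hN]
      exact satClause_mono (insert_subset (by simp [hB]) subset_union_right)
        (hR (insert w B₃) (by simp))

lemma exists_occ_eq (hF : MinSizeUnsat34 F) {x : ℕ} {ε : Bool} {P N₂ N₃ : Clause}
    (hx : 2 < vdeg F x) (hP : F.filter (fun C => (x, ε) ∈ C) = {P})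
    (hN : F.filter (fun C => (x, !ε) ∈ C) = {N₂, N₃}) (hN₂₃ : N₂ ≠ N₃) :
    ∃ a b c d : Lit, a.1 ≠ x ∧
      occ F x = {({(x, ε), a, b} : Clause), {(x, !ε), a, c}, {(x, !ε), a, d}} := by
  have hPF : P ∈ F ∧ (x, ε) ∈ P := mem_of_filter_eq hP (mem_singleton_self P)
  have hN₂F : N₂ ∈ F ∧ (x, !ε) ∈ N₂ := mem_of_filter_eq hN (by simp)
  have hN₃F : N₃ ∈ F ∧ (x, !ε) ∈ N₃ := mem_of_filter_eq hN (by simp)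
  have hcard : ∀ {C l}, C ∈ F → l ∈ C → (C.erase l).card = 2 := fun hC hl =>
    card_erase_eq_two (hF.card_eq_three hC) hl
  obtain ⟨a, ha₁, ha₂, ha₃⟩ :
      ∃ a ∈ P.erase (x, ε), a ∈ N₂.erase (x, !ε) ∧ a ∈ N₃.erase (x, !ε) := by
    by_contra! hno
    obtain ⟨u, w, hB, hu, hw⟩ := exists_eq_pair_notMem_notMem (hcard hPF.1 hPF.2)
      (hcard hN₂F.1 hN₂F.2).le (hcard hN₃F.1 hN₃F.2).le
      (hF.erase_ne_erase hx hP hN₂F.1 hN₂F.2) (hF.erase_ne_erase hx hP hN₃F.1 hN₃F.2) hno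
    exact hF.false_of_erase_eq_pair hx hP hN hN₂₃ hB hu hw
  obtain ⟨b, hb⟩ := exists_eq_triple_of_mem_erase (hF.card_eq_three hPF.1) hPF.2 ha₁
  obtain ⟨c, hc⟩ := exists_eq_triple_of_mem_erase (hF.card_eq_three hN₂F.1) hN₂F.2 ha₂
  obtain ⟨d, hd⟩ := exists_eq_triple_of_mem_erase (hF.card_eq_three hN₃F.1) hN₃F.2 ha₃
  refine ⟨a, b, c, d, ?_, by rw [occ_eq_insert hP hN, ← hb, ← hc, ← hd]⟩
  obtain ⟨v, s⟩ := a
  rintro (rfl : v = x)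
  have h₁ := ne_of_mem_erase ha₁
  have h₂ := ne_of_mem_erase ha₂
  cases s <;> cases ε <;> simp_all

end MinSizeUnsat34

theorem stmt15 (F : CNF) (hF : KS 3 4 F) (hunsat : ¬ Satisfiable F)
    (hmin : ∀ G : CNF, KS 3 4 G → ¬ Satisfiable G → F.card ≤ G.card)
    (x : ℕ) (hx : vdeg F x = 3) :
    ∃ (ε : Bool) (a b c d : Lit), a.1 ≠ x ∧
      occ F x = {({(x, ε), a, b} : Clause), {(x, !ε), a, c}, {(x, !ε), a, d}} := by
  have hF' : MinSizeUnsat34 F := ⟨hF, hunsat, hmin⟩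
  obtain ⟨ε, h₁, h₂⟩ : ∃ ε, ldeg F (x, ε) = 1 ∧ ldeg F (x, !ε) = 2 := by
    have hsum : vdeg F x = ldeg F (x, true) + ldeg F (x, false) :=
      vdeg_eq_ldeg_add (fun C hC => hF'.nontaut hC) x true
    have hpos := hF'.ldeg_ne_zero (x := x) (by omega) true
    have hneg := hF'.ldeg_ne_zero (x := x) (by omega) false
    rcases (by omega : ldeg F (x, true) = 1 ∨ ldeg F (x, false) = 1) with h | h
    · exact ⟨true, h, show ldeg F (x, false) = 2 by omega⟩
    · exact ⟨false, h, show ldeg F (x, true) = 2 by omega⟩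
  obtain ⟨P, hP⟩ := card_eq_one.1 h₁
  obtain ⟨N₂, N₃, hN₂₃, hN⟩ := card_eq_two.1 h₂
  obtain ⟨a, b, c, d, ha, hocc⟩ := hF'.exists_occ_eq (by omega) hP hN hN₂₃
  exact ⟨ε, a, b, c, d, ha, hocc⟩
end
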